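/- arXiv:1206.4716 — 3 statements merged into one kernel-verified Lean document; each statement's English description precedes it below -/
import Mathlib

section
/- Let A ⊂ ℝⁿ be open and convex, B ⊂ ℝᵐ be open, and let fₙ : A × B → ℝ be a sequence of differentiable functions, each convex in the first variable, converging uniformly to a differentiable function f. Then the partial derivatives D₁fₙ with respect to the first variable converge pointwise to D₁f, and moreover the convergence is uniform on compact subsets of A × B. -/
open Filter Metric Set

lemma support_ineq {E : Type*} [NormedAddCommGroup E] [NormedSpace ℝ E]
    {A : Set E} {g : E → ℝ} (hg : ConvexOn ℝ A g) {a x : E}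
    (ha : a ∈ A) (hx : x ∈ A) (hd : DifferentiableAt ℝ g a) :
    fderiv ℝ g a (x - a) ≤ g x - g a := by
  have hline : HasLineDerivAt ℝ g (fderiv ℝ g a (x - a)) a (x - a) :=
    hd.hasFDerivAt.hasLineDerivAt (x - a)
  have hslope := hline.tendsto_slope_zero_right
  refine le_of_tendsto hslope ?_
  filter_upwards [Ioc_mem_nhdsGT_of_mem (Set.left_mem_Ico.mpr one_pos)] with τ hτ
  obtain ⟨hτ0, hτ1⟩ := hτ
  have hmem : a + τ • (x - a) = (1 - τ) • a + τ • x := by module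
  have hcv := hg.2 ha hx (by linarith : (0:ℝ) ≤ 1 - τ) hτ0.le (by ring)
  rw [hmem, smul_eq_mul, inv_mul_le_iff₀ hτ0]
  simp only [smul_eq_mul] at hcv
  nlinarith [hcv]

lemma fderiv_smul_le {E : Type*} [NormedAddCommGroup E] [NormedSpace ℝ E]
    {A : Set E} {g : E → ℝ} {a v : E} {t : ℝ}
    (hg : ConvexOn ℝ A g) (ha : a ∈ A) (hx : a + t • v ∈ A)
    (hd : DifferentiableAt ℝ g a) :
    t * (fderiv ℝ g a v) ≤ g (a + t • v) - g a := by
  have h := support_ineq hg ha hx hd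
  simpa [map_smul] using h

lemma opnorm_le_of_unit {E : Type*} [NormedAddCommGroup E] [NormedSpace ℝ E]
    (ℓ : E →L[ℝ] ℝ) {c : ℝ} (hc : 0 ≤ c) (h : ∀ v : E, ‖v‖ = 1 → ℓ v ≤ c) :
    ‖ℓ‖ ≤ c := by
  apply ℓ.opNorm_le_bound hc
  intro u
  rcases eq_or_ne u 0 with h0 | h0
  · simp [h0]
  · have hv : ‖(‖u‖⁻¹ • u : E)‖ = 1 := norm_smul_inv_norm h0
    have h1 := h _ hv
    have h2 := h (-(‖u‖⁻¹ • u)) (by rw [norm_neg]; exact hv)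
    rw [map_neg] at h2
    have habs : |ℓ ((‖u‖⁻¹ : ℝ) • u)| ≤ c := abs_le.2 ⟨by linarith, h1⟩
    have hval : ℓ ((‖u‖⁻¹ : ℝ) • u) = ‖u‖⁻¹ * ℓ u := by
      rw [map_smul]; rfl
    rw [hval, abs_mul, abs_inv, abs_norm] at habs
    have hupos : 0 < ‖u‖ := norm_pos_iff.mpr h0
    rw [Real.norm_eq_abs]
    calc |ℓ u| = ‖u‖ * (‖u‖⁻¹ * |ℓ u|) := by field_simp
      _ ≤ ‖u‖ * c := by
          gcongr
      _ = c * ‖u‖ := mul_comm _ _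

lemma littleo_bound {E : Type*} [NormedAddCommGroup E] [NormedSpace ℝ E]
    {g : E → ℝ} {L : E →L[ℝ] ℝ} {a : E} (h : HasFDerivAt g L a) {c : ℝ} (hc : 0 < c) :
    ∃ t > 0, ∀ x ∈ Metric.closedBall a t, |g x - g a - L (x - a)| ≤ c * ‖x - a‖ := by
  have := h.isLittleO.bound hc
  rw [Metric.eventually_nhds_iff] at this
  obtain ⟨ε, hε, hb⟩ := this
  refine ⟨ε/2, by linarith, fun x hx => ?_⟩
  have : dist x a < ε := lt_of_le_of_lt (Metric.mem_closedBall.mp hx) (by linarith)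
  simpa [Real.norm_eq_abs] using hb this

lemma convexOn_limit {E : Type*} [NormedAddCommGroup E] [NormedSpace ℝ E]
    {A : Set E} (hA : Convex ℝ A) {F : ℕ → E → ℝ} {f : E → ℝ}
    (hF : ∀ k, ConvexOn ℝ A (F k))
    (hlim : ∀ x ∈ A, Tendsto (fun k => F k x) atTop (nhds (f x))) :
    ConvexOn ℝ A f := by
  refine ⟨hA, fun x hx y hy α β hα hβ hαβ => ?_⟩
  have hmem : α • x + β • y ∈ A := hA hx hy hα hβ hαβ
  exact le_of_tendsto_of_tendsto' (hlim _ hmem)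
    (((hlim x hx).const_mul α).add ((hlim y hy).const_mul β))
    (fun k => (hF k).2 hx hy hα hβ hαβ)

lemma diff_partial {n m : ℕ} {f : EuclideanSpace ℝ (Fin n) × EuclideanSpace ℝ (Fin m) → ℝ}
    {p : EuclideanSpace ℝ (Fin n) × EuclideanSpace ℝ (Fin m)}
    (h : DifferentiableAt ℝ f p) :
    DifferentiableAt ℝ (fun x => f (x, p.2)) p.1 :=
  h.comp p.1 (differentiableAt_id.prodMk (differentiableAt_const _))

lemma contG {n m : ℕ}
    {A : Set (EuclideanSpace ℝ (Fin n))} {B : Set (EuclideanSpace ℝ (Fin m))}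
    (hAopen : IsOpen A) (hBopen : IsOpen B)
    {f : EuclideanSpace ℝ (Fin n) × EuclideanSpace ℝ (Fin m) → ℝ}
    (hconv : ∀ b ∈ B, ConvexOn ℝ A (fun x => f (x, b)))
    (hdf : ∀ p ∈ A ×ˢ B, DifferentiableAt ℝ f p) :
    ∀ p₀ ∈ A ×ˢ B, ∀ η > 0, ∃ δ > 0, ∀ p ∈ A ×ˢ B, dist p p₀ < δ →
      ‖fderiv ℝ (fun x => f (x, p.2)) p.1 - fderiv ℝ (fun x => f (x, p₀.2)) p₀.1‖ ≤ η := by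
  intro p₀ hp₀ η hη
  obtain ⟨ha, hb⟩ := hp₀
  obtain ⟨ε₁, hε₁, hball₁⟩ := Metric.isOpen_iff.mp hAopen p₀.1 ha
  obtain ⟨ε₂, hε₂, hball₂⟩ := Metric.isOpen_iff.mp hBopen p₀.2 hb
  set r₁ := ε₁/2 with hr₁def
  have hr₁ : 0 < r₁ := by positivity
  have hr₁A : closedBall p₀.1 r₁ ⊆ A :=
    (closedBall_subset_ball (by simp [hr₁def]; linarith)).trans hball₁
  set s := ε₂/2 with hsdef
  have hs : 0 < s := by positivity
  have hsB : closedBall p₀.2 s ⊆ B :=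
    (closedBall_subset_ball (by simp [hsdef]; linarith)).trans hball₂
  set L := fderiv ℝ (fun x => f (x, p₀.2)) p₀.1 with hLdef
  have hL : HasFDerivAt (fun x => f (x, p₀.2)) L p₀.1 :=
    (diff_partial (hdf p₀ ⟨ha, hb⟩)).hasFDerivAt
  obtain ⟨t₀, ht₀, hlo⟩ := littleo_bound hL (show (0:ℝ) < η/8 by linarith)
  set t := min t₀ (r₁/2) with htdef
  have ht : 0 < t := lt_min ht₀ (by linarith)
  have htr : t ≤ r₁/2 := min_le_right _ _
  set N := closedBall p₀.1 r₁ ×ˢ closedBall p₀.2 s with hNdef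
  have hNc : IsCompact N := (isCompact_closedBall _ _).prod (isCompact_closedBall _ _)
  have hNsub : N ⊆ A ×ˢ B := Set.prod_mono hr₁A hsB
  have hfc : ContinuousOn f N := fun q hq => ((hdf q (hNsub hq)).continuousAt).continuousWithinAt
  have huc := hNc.uniformContinuousOn_of_continuous hfc
  rw [Metric.uniformContinuousOn_iff] at huc
  obtain ⟨δ₂, hδ₂, hucb⟩ := huc (t*η/8) (by positivity)
  refine ⟨min δ₂ (min (r₁/2) s), by positivity, fun p hp hpd => ?_⟩
  obtain ⟨ha', hb'⟩ := hp
  rw [Prod.dist_eq] at hpd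
  have hd1 : dist p.1 p₀.1 < min δ₂ (min (r₁/2) s) :=
    lt_of_le_of_lt (le_max_left _ _) hpd
  have hd2 : dist p.2 p₀.2 < min δ₂ (min (r₁/2) s) :=
    lt_of_le_of_lt (le_max_right _ _) hpd
  have hd1r : dist p.1 p₀.1 ≤ r₁/2 :=
    le_of_lt (lt_of_lt_of_le hd1 ((min_le_right _ _).trans (min_le_left _ _)))
  have hd2s : dist p.2 p₀.2 ≤ s :=
    le_of_lt (lt_of_lt_of_le hd2 ((min_le_right _ _).trans (min_le_right _ _)))
  have hd1d : dist p.1 p₀.1 < δ₂ := lt_of_lt_of_le hd1 (min_le_left _ _)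
  have hd2d : dist p.2 p₀.2 < δ₂ := lt_of_lt_of_le hd2 (min_le_left _ _)
  apply opnorm_le_of_unit _ hη.le
  intro v hv
  rw [ContinuousLinearMap.sub_apply]
  have hnv : ‖t • v‖ = t := by
    rw [norm_smul, hv, mul_one, Real.norm_eq_abs, abs_of_pos ht]
  have hdist1 : dist (p.1 + t • v) p.1 = t := by
    rw [dist_eq_norm]; simpa using hnv
  have hdist0 : dist (p₀.1 + t • v) p₀.1 = t := by
    rw [dist_eq_norm]; simpa using hnv
  have hm1 : p.1 + t • v ∈ closedBall p₀.1 r₁ := by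
    rw [mem_closedBall]
    calc dist (p.1 + t • v) p₀.1 ≤ dist (p.1 + t • v) p.1 + dist p.1 p₀.1 :=
          dist_triangle _ _ _
      _ ≤ t + r₁/2 := by rw [hdist1]; linarith
      _ ≤ r₁ := by linarith
  have hxA : p.1 + t • v ∈ A := hr₁A hm1
  have hm0 : p₀.1 + t • v ∈ closedBall p₀.1 r₁ := by
    rw [mem_closedBall, hdist0]; linarith
  have hq1 : (p.1 + t • v, p.2) ∈ N := ⟨hm1, by rw [mem_closedBall]; exact hd2s⟩
  have hq2 : (p₀.1 + t • v, p₀.2) ∈ N := ⟨hm0, mem_closedBall_self hs.le⟩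
  have hpN : (p.1, p.2) ∈ N :=
    ⟨by rw [mem_closedBall]; linarith, by rw [mem_closedBall]; exact hd2s⟩
  have hp₀N : (p₀.1, p₀.2) ∈ N := ⟨mem_closedBall_self hr₁.le, mem_closedBall_self hs.le⟩
  have hdq : dist ((p.1 + t • v, p.2) : _ × _) (p₀.1 + t • v, p₀.2) < δ₂ := by
    rw [Prod.dist_eq]
    exact max_lt (by simpa [dist_add_right] using hd1d) hd2d
  have hdp : dist ((p.1, p.2) : _ × _) (p₀.1, p₀.2) < δ₂ := by
    rw [Prod.dist_eq]; exact max_lt hd1d hd2d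
  have huc1 := hucb _ hq1 _ hq2 hdq
  have huc2 := hucb _ hpN _ hp₀N hdp
  rw [Real.dist_eq] at huc1 huc2
  have key1 : t * (fderiv ℝ (fun x => f (x, p.2)) p.1 v) ≤ f (p.1 + t • v, p.2) - f (p.1, p.2) :=
    fderiv_smul_le (hconv p.2 hb') ha' hxA (diff_partial (hdf p ⟨ha', hb'⟩))
  have hlob := hlo (p₀.1 + t • v) (by rw [mem_closedBall, hdist0]; exact min_le_left _ _)
  rw [add_sub_cancel_left, hnv, map_smul, smul_eq_mul] at hlob
  have h1 := abs_le.mp hlob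
  have h2 := abs_lt.mp huc1
  have h3 := abs_lt.mp huc2
  have h9 : t * (fderiv ℝ (fun x => f (x, p.2)) p.1 v - L v) ≤ t * η := by nlinarith
  exact le_of_mul_le_mul_left h9 ht

/-- Rockafellar-type theorem with a parameter: if differentiable functions
`F k` on `A ×ˢ B`, convex in the first variable, converge uniformly to a
differentiable function `f`, then the partial derivatives in the first
variable converge pointwise, and uniformly on compact subsets. -/
theorem stmt0 {n m : ℕ}
    (A : Set (EuclideanSpace ℝ (Fin n))) (B : Set (EuclideanSpace ℝ (Fin m)))
    (hAopen : IsOpen A) (hAconv : Convex ℝ A) (hBopen : IsOpen B)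
    (F : ℕ → EuclideanSpace ℝ (Fin n) × EuclideanSpace ℝ (Fin m) → ℝ)
    (f : EuclideanSpace ℝ (Fin n) × EuclideanSpace ℝ (Fin m) → ℝ)
    (hdF : ∀ k, ∀ p ∈ A ×ˢ B, DifferentiableAt ℝ (F k) p)
    (hconv : ∀ k, ∀ b ∈ B, ConvexOn ℝ A (fun x => F k (x, b)))
    (hdf : ∀ p ∈ A ×ˢ B, DifferentiableAt ℝ f p)
    (hunif : TendstoUniformlyOn F f atTop (A ×ˢ B)) :
    (∀ p ∈ A ×ˢ B,
        Tendsto (fun k => fderiv ℝ (fun x => F k (x, p.2)) p.1) atTop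
          (nhds (fderiv ℝ (fun x => f (x, p.2)) p.1))) ∧
    (∀ K : Set (EuclideanSpace ℝ (Fin n) × EuclideanSpace ℝ (Fin m)),
        K ⊆ A ×ˢ B → IsCompact K →
        TendstoUniformlyOn
          (fun k p => fderiv ℝ (fun x => F k (x, p.2)) p.1)
          (fun p => fderiv ℝ (fun x => f (x, p.2)) p.1) atTop K) := by
  have hdf1 : ∀ p ∈ A ×ˢ B, DifferentiableAt ℝ (fun x => f (x, p.2)) p.1 :=
    fun p hp => diff_partial (hdf p hp)
  have hdF1 : ∀ k, ∀ p ∈ A ×ˢ B, DifferentiableAt ℝ (fun x => F k (x, p.2)) p.1 :=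
    fun k p hp => diff_partial (hdF k p hp)
  have hconvf : ∀ b ∈ B, ConvexOn ℝ A (fun x => f (x, b)) := by
    intro b hb
    apply convexOn_limit hAconv (fun k => hconv k b hb)
    intro x hx
    exact hunif.tendsto_at ⟨hx, hb⟩
  constructor
  · -- pointwise convergence
    intro p hp
    obtain ⟨ha, hb⟩ := hp
    rw [Metric.tendsto_atTop]
    intro η hη
    obtain ⟨ε₁, hε₁, hball₁⟩ := Metric.isOpen_iff.mp hAopen p.1 ha
    set r₁ := ε₁/2 with hr₁def
    have hr₁ : 0 < r₁ := by positivity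
    have hr₁A : closedBall p.1 r₁ ⊆ A :=
      (closedBall_subset_ball (by rw [hr₁def]; linarith)).trans hball₁
    set L := fderiv ℝ (fun x => f (x, p.2)) p.1 with hLdef
    have hL : HasFDerivAt (fun x => f (x, p.2)) L p.1 := (hdf1 p ⟨ha, hb⟩).hasFDerivAt
    obtain ⟨t₀, ht₀, hlo⟩ := littleo_bound hL (show (0:ℝ) < η/8 by linarith)
    set t := min t₀ r₁ with htdef
    have ht : 0 < t := lt_min ht₀ hr₁
    have hev := Metric.tendstoUniformlyOn_iff.mp hunif (t*η/8) (by positivity)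
    rw [eventually_atTop] at hev
    obtain ⟨Nk, hNk⟩ := hev
    refine ⟨Nk, fun k hk => ?_⟩
    rw [dist_eq_norm]
    have hbd : ‖fderiv ℝ (fun x => F k (x, p.2)) p.1 - L‖ ≤ η/2 := by
      apply opnorm_le_of_unit _ (by linarith)
      intro v hv
      rw [ContinuousLinearMap.sub_apply]
      have hnv : ‖t • v‖ = t := by
        rw [norm_smul, hv, mul_one, Real.norm_eq_abs, abs_of_pos ht]
      have hmem : p.1 + t • v ∈ closedBall p.1 r₁ := by
        rw [mem_closedBall, dist_eq_norm, add_sub_cancel_left, hnv]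
        exact min_le_right _ _
      have hxA : p.1 + t • v ∈ A := hr₁A hmem
      have key1 : t * (fderiv ℝ (fun x => F k (x, p.2)) p.1 v)
          ≤ F k (p.1 + t • v, p.2) - F k (p.1, p.2) :=
        fderiv_smul_le (hconv k p.2 hb) ha hxA (hdF1 k p ⟨ha, hb⟩)
      have hu1 := hNk k hk (p.1 + t • v, p.2) ⟨hxA, hb⟩
      have hu2 := hNk k hk (p.1, p.2) ⟨ha, hb⟩
      rw [Real.dist_eq] at hu1 hu2
      have hlob := hlo (p.1 + t • v) (by
        rw [mem_closedBall, dist_eq_norm, add_sub_cancel_left, hnv]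
        exact min_le_left _ _)
      rw [add_sub_cancel_left, hnv, map_smul, smul_eq_mul] at hlob
      have h1 := abs_le.mp hlob
      have h2 := abs_lt.mp hu1
      have h3 := abs_lt.mp hu2
      have h9 : t * (fderiv ℝ (fun x => F k (x, p.2)) p.1 v - L v) ≤ t * (η/2) := by
        nlinarith
      exact le_of_mul_le_mul_left h9 ht
    exact lt_of_le_of_lt hbd (by linarith)
  · -- uniform convergence on compacts
    intro K hK hKc
    have hGc := contG hAopen hBopen hconvf hdf
    obtain ⟨r, hr, hrsub⟩ := hKc.exists_cthickening_subset_open (hAopen.prod hBopen) hK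
    set K' := Metric.cthickening r K with hK'def
    have hK'c : IsCompact K' := hKc.cthickening
    have hK'sub : K' ⊆ A ×ˢ B := hrsub
    have hKK' : K ⊆ K' := Metric.self_subset_cthickening K
    have hGco : ContinuousOn (fun p => fderiv ℝ (fun x => f (x, p.2)) p.1) (A ×ˢ B) := by
      intro q hq
      rw [Metric.continuousWithinAt_iff]
      intro ε hε
      obtain ⟨δ, hδ, hh⟩ := hGc q hq (ε/2) (by linarith)
      refine ⟨δ, hδ, fun {y} hy hyd => ?_⟩
      have hyle := hh y hy hyd
      rw [dist_eq_norm]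
      linarith
    have huc := hK'c.uniformContinuousOn_of_continuous (hGco.mono hK'sub)
    rw [Metric.uniformContinuousOn_iff] at huc
    rw [Metric.tendstoUniformlyOn_iff]
    intro η hη
    obtain ⟨δ₁, hδ₁, hucb⟩ := huc (η/8) (by linarith)
    set t := min r (δ₁/2) with htdef
    have ht : 0 < t := lt_min hr (by linarith)
    have hkey : ∀ p ∈ K, ∀ v : EuclideanSpace ℝ (Fin n), ‖v‖ = 1 →
        (p.1 + t • v, p.2) ∈ A ×ˢ B ∧
        f (p.1 + t • v, p.2) - f (p.1, p.2)
          - t * (fderiv ℝ (fun x => f (x, p.2)) p.1 v) ≤ t * (η/8) := by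
      intro p hp v hv
      have hnv : ‖t • v‖ = t := by
        rw [norm_smul, hv, mul_one, Real.norm_eq_abs, abs_of_pos ht]
      have hdistq : dist ((p.1 + t • v, p.2) : _ × _) p = t := by
        rw [show p = (p.1, p.2) from rfl, Prod.dist_eq]
        simp only [dist_self]
        rw [dist_eq_norm, add_sub_cancel_left, hnv]
        exact max_eq_left ht.le
      have hq'K' : ((p.1 + t • v, p.2) : _ × _) ∈ K' :=
        mem_cthickening_of_dist_le _ p r K hp (by rw [hdistq]; exact min_le_left _ _)
      have hq'AB := hK'sub hq'K'
      obtain ⟨ha, hb⟩ := hK'sub (hKK' hp)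
      have hxA : p.1 + t • v ∈ A := hq'AB.1
      refine ⟨⟨hxA, hb⟩, ?_⟩
      have he : (p.1 + t • v) + t • (-v) = p.1 := by module
      have hdq' : DifferentiableAt ℝ (fun x => f (x, p.2)) (p.1 + t • v) :=
        diff_partial (hdf _ hq'AB)
      have hup0 : t * (fderiv ℝ (fun x => f (x, p.2)) (p.1 + t • v) (-v))
          ≤ f ((p.1 + t • v) + t • (-v), p.2) - f (p.1 + t • v, p.2) :=
        fderiv_smul_le (hconvf p.2 hb) hxA (by rw [he]; exact ha) hdq'
      rw [he, map_neg] at hup0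
      have hGd : ‖fderiv ℝ (fun x => f (x, p.2)) (p.1 + t • v)
          - fderiv ℝ (fun x => f (x, p.2)) p.1‖ < η/8 := by
        have := hucb _ hq'K' _ (hKK' hp) (by
          rw [hdistq]
          exact lt_of_le_of_lt (min_le_right _ _) (by linarith))
        simpa [dist_eq_norm] using this
      have happ : (fderiv ℝ (fun x => f (x, p.2)) (p.1 + t • v)
            - fderiv ℝ (fun x => f (x, p.2)) p.1) v
          ≤ ‖fderiv ℝ (fun x => f (x, p.2)) (p.1 + t • v)
            - fderiv ℝ (fun x => f (x, p.2)) p.1‖ := by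
        calc _ ≤ |(fderiv ℝ (fun x => f (x, p.2)) (p.1 + t • v)
              - fderiv ℝ (fun x => f (x, p.2)) p.1) v| := le_abs_self _
          _ ≤ _ := by
              have := (fderiv ℝ (fun x => f (x, p.2)) (p.1 + t • v)
                - fderiv ℝ (fun x => f (x, p.2)) p.1).le_opNorm v
              rwa [Real.norm_eq_abs, hv, mul_one] at this
      rw [ContinuousLinearMap.sub_apply] at happ
      nlinarith
    have hev := Metric.tendstoUniformlyOn_iff.mp hunif (t*η/8) (by positivity)
    filter_upwards [hev] with k hkb
    intro p hp
    obtain ⟨ha, hb⟩ := hK'sub (hKK' hp)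
    rw [dist_eq_norm]
    have hchain : ∀ w : EuclideanSpace ℝ (Fin n), ‖w‖ = 1 →
        fderiv ℝ (fun x => F k (x, p.2)) p.1 w
          - fderiv ℝ (fun x => f (x, p.2)) p.1 w ≤ η/2 := by
      intro w hw
      obtain ⟨hq'AB, hflow⟩ := hkey p hp w hw
      have key1 : t * (fderiv ℝ (fun x => F k (x, p.2)) p.1 w)
          ≤ F k (p.1 + t • w, p.2) - F k (p.1, p.2) :=
        fderiv_smul_le (hconv k p.2 hb) ha hq'AB.1 (hdF1 k p ⟨ha, hb⟩)
      have hu1 := hkb (p.1 + t • w, p.2) hq'AB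
      have hu2 := hkb (p.1, p.2) ⟨ha, hb⟩
      rw [Real.dist_eq] at hu1 hu2
      have h2 := abs_lt.mp hu1
      have h3 := abs_lt.mp hu2
      have h9 : t * (fderiv ℝ (fun x => F k (x, p.2)) p.1 w
          - fderiv ℝ (fun x => f (x, p.2)) p.1 w) ≤ t * (η/2) := by nlinarith
      exact le_of_mul_le_mul_left h9 ht
    have hbd : ‖fderiv ℝ (fun x => f (x, p.2)) p.1
        - fderiv ℝ (fun x => F k (x, p.2)) p.1‖ ≤ η/2 := by
      apply opnorm_le_of_unit _ (by linarith)
      intro v hv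
      rw [ContinuousLinearMap.sub_apply]
      have := hchain (-v) (by rw [norm_neg]; exact hv)
      simp only [map_neg] at this
      linarith
    exact lt_of_le_of_lt hbd (by linarith)
end

section
/- Let w : ℝᵈ → ℝ be C², let f = |Dw|², and suppose f attains a maximum at a point z₀. Let b = b(x, u, p) be C¹ and suppose w satisfies −ε|Dw|² − εΔw + b(x, w, Dw) = g(t) pointwise (as the spatial part of a parabolic equation at a fixed time where additionally f_t(z₀) = 0). If at z₀ one has f_t(z₀) = 0, Df(z₀) = 0, Δf(z₀) ≤ 0, then ε|D²w(z₀)|² + b_x(z₀, w(z₀), Dw(z₀))·Dw(z₀) + b_u(z₀, w(z₀), Dw(z₀)) f(z₀) ≤ 0. -/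
lemma aux_dir {d : ℕ} (u : (Fin d → ℝ) → ℝ) (x v a : Fin d → ℝ)
    (hu : DifferentiableAt ℝ (fderiv ℝ u) x) :
    fderiv ℝ (fun y => fderiv ℝ u y v) x a = fderiv ℝ (fderiv ℝ u) x a v := by
  rw [(hu.hasFDerivAt.clm_apply (hasFDerivAt_const v x)).fderiv]
  simp

lemma aux_symm {d : ℕ} (u : (Fin d → ℝ) → ℝ) (x v a : Fin d → ℝ)
    (hu : ContDiffAt ℝ 2 u x) :
    fderiv ℝ (fun y => fderiv ℝ u y v) x a = fderiv ℝ (fun y => fderiv ℝ u y a) x v := by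
  have hd : DifferentiableAt ℝ (fderiv ℝ u) x :=
    (hu.fderiv_right (m := 1) (by norm_num)).differentiableAt (by norm_num)
  rw [aux_dir u x v a hd, aux_dir u x a v hd, (hu.isSymmSndFDerivAt (by norm_num)) a v]

/-- first partial derivative -/
noncomputable abbrev pd (d : ℕ) (w : (Fin d → ℝ) → ℝ) (j : Fin d) : (Fin d → ℝ) → ℝ :=
  fun x => fderiv ℝ w x (Pi.single j 1)

/-- second partial derivative: `sd d w i j = ∂ᵢ ∂ⱼ w` -/
noncomputable abbrev sd (d : ℕ) (w : (Fin d → ℝ) → ℝ) (i j : Fin d) : (Fin d → ℝ) → ℝ :=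
  fun x => fderiv ℝ (pd d w j) x (Pi.single i 1)

variable {d : ℕ} {w : (Fin d → ℝ) → ℝ}

lemma pd_cd (hw : ContDiff ℝ 3 w) (j : Fin d) : ContDiff ℝ 2 (pd d w j) :=
  (hw.fderiv_right (m := 2) (by norm_num)).clm_apply contDiff_const

lemma sd_cd (hw : ContDiff ℝ 3 w) (i j : Fin d) : ContDiff ℝ 1 (sd d w i j) :=
  ((pd_cd hw j).fderiv_right (m := 1) (by norm_num)).clm_apply contDiff_const

lemma sd_symm (hw : ContDiff ℝ 3 w) (i j : Fin d) (x : Fin d → ℝ) :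
    sd d w i j x = sd d w j i x :=
  aux_symm w x (Pi.single j 1) (Pi.single i 1) (hw.contDiffAt.of_le (by norm_num))

lemma td_symm1 (hw : ContDiff ℝ 3 w) (a b c : Fin d) (x : Fin d → ℝ) :
    fderiv ℝ (sd d w b c) x (Pi.single a 1) = fderiv ℝ (sd d w a c) x (Pi.single b 1) :=
  aux_symm (pd d w c) x (Pi.single b 1) (Pi.single a 1) ((pd_cd hw c).contDiffAt)

lemma td_symm2 (hw : ContDiff ℝ 3 w) (a b c : Fin d) (x : Fin d → ℝ) :
    fderiv ℝ (sd d w b c) x (Pi.single a 1) = fderiv ℝ (sd d w c b) x (Pi.single a 1) := by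
  have h : sd d w b c = sd d w c b := funext fun y => sd_symm hw b c y
  rw [h]

lemma sumsq_hasfd (hw : ContDiff ℝ 3 w) (x : Fin d → ℝ) :
    HasFDerivAt (fun x => ∑ j, (pd d w j x) ^ 2)
      (∑ j, (2 * pd d w j x) • fderiv ℝ (pd d w j) x) x := by
  refine HasFDerivAt.fun_sum fun j _ => ?_
  have h := (((pd_cd hw j).differentiable (by norm_num)) x).hasFDerivAt
  have heq : (2 * pd d w j x) • fderiv ℝ (pd d w j) x
      = pd d w j x • fderiv ℝ (pd d w j) x + pd d w j x • fderiv ℝ (pd d w j) x := by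
    rw [two_mul, add_smul]
  rw [heq]
  simpa [pow_two] using h.fun_mul h

lemma sumsq_dir (hw : ContDiff ℝ 3 w) (x v : Fin d → ℝ) :
    fderiv ℝ (fun x => ∑ j, (pd d w j x) ^ 2) x v
      = ∑ j, 2 * pd d w j x * fderiv ℝ (pd d w j) x v := by
  rw [(sumsq_hasfd hw x).fderiv]
  simp [mul_assoc]
/-- Bernstein-method inequality at an interior maximum of `f = |Dw|²`: if
`w` solves `−ε|Dw|² − εΔw + b(x, w, Dw) = g₀` pointwise and `f` attains its
maximum at `z₀` (so `Df(z₀) = 0`, `Δf(z₀) ≤ 0`), then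
`ε|D²w(z₀)|² + b_x·Dw(z₀) + b_u f(z₀) ≤ 0`. -/
theorem stmt8 (d : ℕ) (ε : ℝ) (hε : 0 < ε)
    (w : (Fin d → ℝ) → ℝ) (hw : ContDiff ℝ 3 w)
    (b : (Fin d → ℝ) → ℝ → (Fin d → ℝ) → ℝ)
    (hb : ContDiff ℝ 1 fun q : ((Fin d → ℝ) × ℝ × (Fin d → ℝ)) => b q.1 q.2.1 q.2.2)
    (g₀ : ℝ)
    (heq : ∀ x, -ε * (∑ i, (fderiv ℝ w x (Pi.single i 1)) ^ 2)
        - ε * (∑ i, fderiv ℝ (fun y => fderiv ℝ w y (Pi.single i 1)) x (Pi.single i 1))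
        + b x (w x) (fun i => fderiv ℝ w x (Pi.single i 1)) = g₀)
    (f : (Fin d → ℝ) → ℝ)
    (hf : ∀ x, f x = ∑ i, (fderiv ℝ w x (Pi.single i 1)) ^ 2)
    (z₀ : Fin d → ℝ) (hmax : IsMaxOn f Set.univ z₀)
    (hDf : fderiv ℝ f z₀ = 0)
    (hΔf : (∑ i, fderiv ℝ (fun y => fderiv ℝ f y (Pi.single i 1)) z₀ (Pi.single i 1)) ≤ 0) :
    ε * (∑ i, ∑ j,
        (fderiv ℝ (fun y => fderiv ℝ w y (Pi.single j 1)) z₀ (Pi.single i 1)) ^ 2)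
      + (∑ i, fderiv ℝ (fun y => b y (w z₀) (fun j => fderiv ℝ w z₀ (Pi.single j 1))) z₀
            (Pi.single i 1) * fderiv ℝ w z₀ (Pi.single i 1))
      + deriv (fun u => b z₀ u (fun j => fderiv ℝ w z₀ (Pi.single j 1))) (w z₀) * f z₀
      ≤ 0 := by
  classical
  have hfeq : f = fun x => ∑ j, (pd d w j x) ^ 2 := funext hf
  -- scalar form of `Df(z₀) = 0`
  have hK1 : ∀ i : Fin d, ∑ j, pd d w j z₀ * sd d w i j z₀ = 0 := by
    intro i
    have h0 : fderiv ℝ f z₀ (Pi.single i 1) = 0 := by rw [hDf]; rfl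
    rw [hfeq, sumsq_dir hw z₀ (Pi.single i 1)] at h0
    have h0' : ∑ j, 2 * pd d w j z₀ * sd d w i j z₀ = 0 := h0
    have h2 : (2:ℝ) * ∑ j, pd d w j z₀ * sd d w i j z₀ = 0 := by
      rw [Finset.mul_sum]; rw [← h0']; congr 1; funext j; ring
    linarith
  set B : ((Fin d → ℝ) × ℝ × (Fin d → ℝ)) → ℝ := fun q => b q.1 q.2.1 q.2.2 with hBdef
  set P : (Fin d → ℝ) → (Fin d → ℝ) := fun x j => pd d w j x with hPdef
  set L : ((Fin d → ℝ) × ℝ × (Fin d → ℝ)) →L[ℝ] ℝ := fderiv ℝ B (z₀, w z₀, P z₀) with hLdef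
  have hBd : HasFDerivAt B L (z₀, w z₀, P z₀) :=
    ((hb.differentiable (by norm_num)) _).hasFDerivAt
  have hPd : ∀ x, HasFDerivAt P (ContinuousLinearMap.pi fun j => fderiv ℝ (pd d w j) x) x := by
    intro x
    exact hasFDerivAt_pi.mpr fun j => (((pd_cd hw j).differentiable (by norm_num)) x).hasFDerivAt
  -- split of L into partials
  have hLsplit : ∀ (v : Fin d → ℝ) (a : ℝ) (q : Fin d → ℝ),
      L (v, a, q) = L (v, 0, 0) + a * L (0, 1, 0) + L (0, 0, q) := by
    intro v a q
    have h1 : ((v, a, q) : (Fin d → ℝ) × ℝ × (Fin d → ℝ))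
        = (v, (0:ℝ), (0:Fin d → ℝ)) + a • ((0:Fin d → ℝ), (1:ℝ), (0:Fin d → ℝ))
          + ((0:Fin d → ℝ), (0:ℝ), q) := by
      simp [Prod.ext_iff]
    rw [h1, map_add, map_add, map_smul, smul_eq_mul]
  -- the b_x slice
  have hbx : ∀ i : Fin d, fderiv ℝ (fun y => b y (w z₀) (P z₀)) z₀ (Pi.single i 1)
      = L (Pi.single i 1, 0, 0) := by
    intro i
    have hι : HasFDerivAt (fun y : Fin d → ℝ => (y, w z₀, P z₀))
        ((ContinuousLinearMap.id ℝ (Fin d → ℝ)).prod 0) z₀ :=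
      (hasFDerivAt_id z₀).prodMk (hasFDerivAt_const _ _)
    have h2 : HasFDerivAt (fun y => b y (w z₀) (P z₀))
        (L.comp ((ContinuousLinearMap.id ℝ (Fin d → ℝ)).prod 0)) z₀ := by have := hBd.comp z₀ hι; exact this
    rw [h2.fderiv]
    simp [Prod.mk_zero_zero]
  -- the b_u slice
  have hbu : deriv (fun u => b z₀ u (P z₀)) (w z₀) = L (0, 1, 0) := by
    have hκ : HasFDerivAt (fun u : ℝ => ((z₀ : Fin d → ℝ), u, P z₀))
        ((0 : ℝ →L[ℝ] (Fin d → ℝ)).prod ((ContinuousLinearMap.id ℝ ℝ).prod 0)) (w z₀) :=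
      (hasFDerivAt_const _ _).prodMk ((hasFDerivAt_id _).prodMk (hasFDerivAt_const _ _))
    have h2 : HasFDerivAt (fun u : ℝ => b z₀ u (P z₀))
        (L.comp ((0 : ℝ →L[ℝ] (Fin d → ℝ)).prod ((ContinuousLinearMap.id ℝ ℝ).prod 0))) (w z₀) :=
      by have := hBd.comp (w z₀) hκ; exact this
    rw [h2.hasDerivAt.deriv]
    simp
  -- derivative of the Laplacian term
  have hLap : HasFDerivAt (fun x => ∑ j, fderiv ℝ (pd d w j) x (Pi.single j 1))
      (∑ j, fderiv ℝ (sd d w j j) z₀) z₀ := by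
    refine HasFDerivAt.fun_sum fun j _ => ?_
    exact (((sd_cd hw j j).differentiable (by norm_num)) z₀).hasFDerivAt
  -- derivative of the composite b-term
  have hF : HasFDerivAt (fun x : Fin d → ℝ => ((x, w x, P x) : (Fin d → ℝ) × ℝ × (Fin d → ℝ)))
      ((ContinuousLinearMap.id ℝ (Fin d → ℝ)).prod ((fderiv ℝ w z₀).prod
        (ContinuousLinearMap.pi fun j => fderiv ℝ (pd d w j) z₀))) z₀ :=
    (hasFDerivAt_id z₀).prodMk ((((hw.differentiable (by norm_num)) z₀).hasFDerivAt).prodMk (hPd z₀))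
  have hcomp : HasFDerivAt (fun x => b x (w x) (P x))
      (L.comp ((ContinuousLinearMap.id ℝ (Fin d → ℝ)).prod ((fderiv ℝ w z₀).prod
        (ContinuousLinearMap.pi fun j => fderiv ℝ (pd d w j) z₀)))) z₀ := by have := hBd.comp z₀ hF; exact this
  -- differentiating the PDE at z₀
  have hΦ : HasFDerivAt (fun x => -ε * (∑ j, (pd d w j x) ^ 2)
        - ε * (∑ j, fderiv ℝ (pd d w j) x (Pi.single j 1)) + b x (w x) (P x))
      ((-ε) • (∑ j, (2 * pd d w j z₀) • fderiv ℝ (pd d w j) z₀)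
        - ε • (∑ j, fderiv ℝ (sd d w j j) z₀)
        + L.comp ((ContinuousLinearMap.id ℝ (Fin d → ℝ)).prod ((fderiv ℝ w z₀).prod
          (ContinuousLinearMap.pi fun j => fderiv ℝ (pd d w j) z₀)))) z₀ := by
    exact (((sumsq_hasfd hw z₀).const_mul (-ε)).sub (hLap.const_mul ε)).add hcomp
  have heqc : (fun x => -ε * (∑ j, (pd d w j x) ^ 2)
        - ε * (∑ j, fderiv ℝ (pd d w j) x (Pi.single j 1)) + b x (w x) (P x))
      = fun _ => g₀ := funext heq
  have hΦ0 : ((-ε) • (∑ j, (2 * pd d w j z₀) • fderiv ℝ (pd d w j) z₀)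
        - ε • (∑ j, fderiv ℝ (sd d w j j) z₀)
        + L.comp ((ContinuousLinearMap.id ℝ (Fin d → ℝ)).prod ((fderiv ℝ w z₀).prod
          (ContinuousLinearMap.pi fun j => fderiv ℝ (pd d w j) z₀))))
      = (0 : (Fin d → ℝ) →L[ℝ] ℝ) := by
    refine (heqc ▸ hΦ).unique (hasFDerivAt_const g₀ z₀)
  -- scalar form of the differentiated equation
  have hEQ : ∀ i : Fin d,
      -ε * (∑ j, 2 * pd d w j z₀ * sd d w i j z₀)
      - ε * (∑ j, fderiv ℝ (sd d w j j) z₀ (Pi.single i 1))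
      + L (Pi.single i 1, pd d w i z₀, fun j => sd d w i j z₀) = 0 := by
    intro i
    have h := congrArg (fun (M : (Fin d → ℝ) →L[ℝ] ℝ) => M (Pi.single i 1)) hΦ0
    simpa [ContinuousLinearMap.sum_apply, Finset.mul_sum, mul_assoc] using h
  have hEQ2 : ∀ i : Fin d, L (Pi.single i 1, pd d w i z₀, fun j => sd d w i j z₀)
      = ε * ∑ j, fderiv ℝ (sd d w j j) z₀ (Pi.single i 1) := by
    intro i
    have e1 : ∑ j, 2 * pd d w j z₀ * sd d w i j z₀
        = 2 * ∑ j, pd d w j z₀ * sd d w i j z₀ := by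
      rw [Finset.mul_sum]; exact Finset.sum_congr rfl fun j _ => by ring
    have h := hEQ i
    rw [e1, hK1 i] at h
    linarith
  -- the `b_p` term vanishes at the critical point
  have hv : ∑ i, pd d w i z₀ * L (0, 0, fun j => sd d w i j z₀) = 0 := by
    have h1 : ∀ i : Fin d, pd d w i z₀ * L (0, 0, fun j => sd d w i j z₀)
        = L (0, 0, fun j => pd d w i z₀ * sd d w i j z₀) := by
      intro i
      have hsm : (pd d w i z₀) • (((0:Fin d → ℝ), (0:ℝ), (fun j => sd d w i j z₀))
            : (Fin d → ℝ) × ℝ × (Fin d → ℝ))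
          = ((0:Fin d → ℝ), (0:ℝ), (fun j => pd d w i z₀ * sd d w i j z₀)) := by
        refine Prod.ext (by simp) (Prod.ext (by simp) ?_)
        funext j; simp
      rw [← hsm, map_smul, smul_eq_mul]
    have h2 : ∑ i, L ((0:Fin d → ℝ), (0:ℝ), fun j => pd d w i z₀ * sd d w i j z₀)
        = L ((0:Fin d → ℝ), (0:ℝ), fun j => ∑ i, pd d w i z₀ * sd d w i j z₀) := by
      rw [← map_sum]
      congr 1
      refine Prod.ext (by simp [Prod.fst_sum]) (Prod.ext (by simp [Prod.fst_sum, Prod.snd_sum]) ?_)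
      funext j
      simp [Prod.snd_sum, Finset.sum_apply]
    have h3 : (fun j => ∑ i, pd d w i z₀ * sd d w i j z₀) = (0 : Fin d → ℝ) := by
      funext j
      have e2 : ∑ i, pd d w i z₀ * sd d w i j z₀ = ∑ i, pd d w i z₀ * sd d w j i z₀ :=
        Finset.sum_congr rfl fun i _ => by rw [sd_symm hw i j z₀]
      rw [e2]
      simpa using hK1 j
    rw [Finset.sum_congr rfl (fun i _ => h1 i), h2, h3]
    exact L.map_zero
  -- key identity: b_x·Dw + b_u f = ε ∑ᵢⱼ pᵢ Tᵢⱼⱼ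
  have key1 : (∑ i, L (Pi.single i 1, 0, 0) * pd d w i z₀)
      + (∑ i, L (0, 1, 0) * (pd d w i z₀) ^ 2)
      = ε * ∑ i, ∑ j, pd d w i z₀ * fderiv ℝ (sd d w j j) z₀ (Pi.single i 1) := by
    have h4 : ∀ i : Fin d, pd d w i z₀ * L (Pi.single i 1, pd d w i z₀, fun j => sd d w i j z₀)
        = L (Pi.single i 1, 0, 0) * pd d w i z₀ + L (0, 1, 0) * (pd d w i z₀) ^ 2
          + pd d w i z₀ * L (0, 0, fun j => sd d w i j z₀) := by
      intro i; rw [hLsplit]; ring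
    have h5 : ∑ i, pd d w i z₀ * L (Pi.single i 1, pd d w i z₀, fun j => sd d w i j z₀)
        = ε * ∑ i, ∑ j, pd d w i z₀ * fderiv ℝ (sd d w j j) z₀ (Pi.single i 1) := by
      rw [Finset.mul_sum]
      refine Finset.sum_congr rfl fun i _ => ?_
      rw [hEQ2 i]
      simp only [Finset.mul_sum]
      exact Finset.sum_congr rfl fun j _ => by ring
    rw [Finset.sum_congr rfl (fun i _ => h4 i), Finset.sum_add_distrib,
      Finset.sum_add_distrib, hv, add_zero] at h5
    exact h5
  have hsd : ∀ (a c : Fin d) (x : Fin d → ℝ),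
      fderiv ℝ (pd d w c) x (Pi.single a 1) = sd d w a c x := fun _ _ _ => rfl
  -- second derivative of f in direction i
  have hΔcomp : ∀ i : Fin d, fderiv ℝ (fun y => fderiv ℝ f y (Pi.single i 1)) z₀ (Pi.single i 1)
      = ∑ j, (2 * sd d w i j z₀ * sd d w i j z₀
          + 2 * pd d w j z₀ * fderiv ℝ (sd d w i j) z₀ (Pi.single i 1)) := by
    intro i
    have hfun : (fun y => fderiv ℝ f y (Pi.single i 1))
        = fun y => ∑ j, 2 * pd d w j y * sd d w i j y := by
      funext y
      rw [hfeq]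
      exact sumsq_dir hw y (Pi.single i 1)
    rw [hfun]
    have hterm : ∀ j : Fin d, HasFDerivAt (fun y => 2 * pd d w j y * sd d w i j y)
        ((2 * pd d w j z₀) • fderiv ℝ (sd d w i j) z₀
          + sd d w i j z₀ • ((2:ℝ) • fderiv ℝ (pd d w j) z₀)) z₀ := by
      intro j
      have h1 : HasFDerivAt (fun y => 2 * pd d w j y) ((2:ℝ) • fderiv ℝ (pd d w j) z₀) z₀ :=
        ((((pd_cd hw j).differentiable (by norm_num)) z₀).hasFDerivAt).const_mul 2
      have h2 : HasFDerivAt (sd d w i j) (fderiv ℝ (sd d w i j) z₀) z₀ :=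
        (((sd_cd hw i j).differentiable (by norm_num)) z₀).hasFDerivAt
      exact h1.fun_mul h2
    rw [(HasFDerivAt.fun_sum fun j (_ : j ∈ Finset.univ) => hterm j).fderiv]
    simp only [ContinuousLinearMap.sum_apply, ContinuousLinearMap.add_apply,
      ContinuousLinearMap.smul_apply, smul_eq_mul, hsd]
    exact Finset.sum_congr rfl fun j _ => by ring
  -- third-derivative symmetry
  have hT3 : ∀ i j : Fin d, fderiv ℝ (sd d w i j) z₀ (Pi.single i 1)
      = fderiv ℝ (sd d w i i) z₀ (Pi.single j 1) := by
    intro i j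
    rw [td_symm2 hw i i j z₀]
    exact td_symm1 hw i j i z₀
  -- consequence of Δf(z₀) ≤ 0
  have hQS : (∑ i, ∑ j, (sd d w i j z₀)^2)
      + ∑ i, ∑ j, pd d w i z₀ * fderiv ℝ (sd d w j j) z₀ (Pi.single i 1) ≤ 0 := by
    have h6 := hΔf
    rw [Finset.sum_congr rfl (fun i (_ : i ∈ Finset.univ) => hΔcomp i)] at h6
    have hA : ∑ i, ∑ j, 2 * sd d w i j z₀ * sd d w i j z₀
        = 2 * ∑ i, ∑ j, (sd d w i j z₀)^2 := by
      simp only [Finset.mul_sum]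
      exact Finset.sum_congr rfl fun i _ => Finset.sum_congr rfl fun j _ => by ring
    have hB : ∑ i, ∑ j, 2 * pd d w j z₀ * fderiv ℝ (sd d w i j) z₀ (Pi.single i 1)
        = 2 * ∑ i, ∑ j, pd d w i z₀ * fderiv ℝ (sd d w j j) z₀ (Pi.single i 1) := by
      rw [Finset.sum_comm]
      simp only [Finset.mul_sum]
      refine Finset.sum_congr rfl fun a _ => Finset.sum_congr rfl fun c _ => ?_
      rw [hT3 c a]
      ring
    rw [Finset.sum_congr rfl (fun i (_ : i ∈ Finset.univ) => Finset.sum_add_distrib),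
      Finset.sum_add_distrib, hA, hB] at h6
    linarith
  -- final assembly
  have hfz : f z₀ = ∑ i, (pd d w i z₀)^2 := hf z₀
  have hS3 : ∑ i, ∑ j, pd d w i z₀ * fderiv ℝ (sd d w j j) z₀ (Pi.single i 1)
      ≤ - ∑ i, ∑ j, (sd d w i j z₀)^2 := by linarith
  have h8 : (∑ i, L (Pi.single i 1, 0, 0) * pd d w i z₀)
      + (∑ i, L (0, 1, 0) * (pd d w i z₀)^2)
      ≤ ε * (- ∑ i, ∑ j, (sd d w i j z₀)^2) := by
    rw [key1]
    exact mul_le_mul_of_nonneg_left hS3 hε.le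
  have h9 : L (0, 1, 0) * f z₀ = ∑ i, L (0, 1, 0) * (pd d w i z₀)^2 := by
    rw [hfz, Finset.mul_sum]
  show ε * (∑ i, ∑ j, (sd d w i j z₀)^2)
      + (∑ i, fderiv ℝ (fun y => b y (w z₀) (P z₀)) z₀ (Pi.single i 1) * pd d w i z₀)
      + deriv (fun u => b z₀ u (P z₀)) (w z₀) * f z₀ ≤ 0
  rw [hbu, show (∑ i, fderiv ℝ (fun y => b y (w z₀) (P z₀)) z₀ (Pi.single i 1) * pd d w i z₀)
      = ∑ i, L (Pi.single i 1, 0, 0) * pd d w i z₀ from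
      Finset.sum_congr rfl fun i _ => by rw [hbx i]]
  linarith
end

section
/- (Maximum principle step for uniform bound on ψ_ε.) Let ψ : 𝕋ᵈ × ℝ → ℝ be C² and 1-periodic in time, satisfying at every point where Dψ-related condition holds the evolution inequality coming from ψ = max φ − φ + 1 with φ solving φ_t + εΔφ + H(x,Dφ,t) = c(ε). Set a = max_{(x,t)} H(x,0,t) − min_{(x,t)} H(x,0,t), fix δ > 0 and t_ε with ψ(x, t_ε) ≤ e^K for all x, and define v(x,t) = ψ(x, t + t_ε) − e^K + (a+δ)t for t ≤ 0. If v(x₀,t₀) > 0 for some x₀ and t₀ < 0, then (by continuity and v(·,0) ≤ 0) there exist t̄ ∈ [t₀,0] and x̄ with v(x̄,t̄) = 0, v_t(x̄,t̄) ≤ 0, Dv(x̄,t̄) = 0, Δv(x̄,t̄) ≤ 0, and these conditions together with the PDE for φ yield 0 ≥ δ, a contradiction. Hence ψ(x,t) ≤ a + e^K for all (x,t). -/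
open Set Filter Topology

/-- One-sided first-derivative test: if `f` has a max at the left of an interval,
its derivative there is nonpositive. -/
private lemma deriv_nonpos_of_maxOn_right {f : ℝ → ℝ} {f' b c : ℝ} (h : HasDerivAt f f' b)
    (hbc : b < c) (hmax : ∀ t ∈ Set.Icc b c, f t ≤ f b) : f' ≤ 0 := by
  have hslope : Tendsto (slope f b) (𝓝[>] b) (𝓝 f') :=
    (hasDerivAt_iff_tendsto_slope.mp h).mono_left
      (nhdsWithin_mono b fun t ht => ne_of_gt ht)
  refine le_of_tendsto hslope ?_
  filter_upwards [Ioc_mem_nhdsGT_of_mem ⟨le_refl b, hbc⟩] with t ht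
  rw [slope_def_field]
  exact div_nonpos_of_nonpos_of_nonneg (sub_nonpos.mpr (hmax t ⟨ht.1.le, ht.2⟩))
    (sub_nonneg.mpr ht.1.le)

/-- Second-derivative test at a global minimum. -/
private lemma second_deriv_nonneg_of_min {g g' : ℝ → ℝ} {c₂ : ℝ}
    (hg : ∀ s, HasDerivAt g (g' s) s) (hg' : HasDerivAt g' c₂ 0)
    (hmin : ∀ s, g 0 ≤ g s) : 0 ≤ c₂ := by
  by_contra hneg
  push_neg at hneg
  have hloc : IsLocalMin g 0 := Filter.Eventually.of_forall hmin
  have hg0 : g' 0 = 0 := hloc.hasDerivAt_eq_zero (hg 0)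
  have hslope : Tendsto (slope g' 0) (𝓝[>] (0:ℝ)) (𝓝 c₂) :=
    (hasDerivAt_iff_tendsto_slope.mp hg').mono_left
      (nhdsWithin_mono 0 fun t ht => ne_of_gt ht)
  have hev : ∀ᶠ s in 𝓝[>] (0:ℝ), g' s < 0 := by
    filter_upwards [hslope (Iio_mem_nhds hneg), self_mem_nhdsWithin] with s hs hs'
    have hspos : (0:ℝ) < s := hs'
    have : slope g' 0 s = g' s / s := by
      rw [slope_def_field, hg0, sub_zero, sub_zero]
    have hs2 : slope g' 0 s < 0 := hs
    rw [this] at hs2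
    rcases div_neg_iff.mp hs2 with h | h
    · exact absurd hspos (not_lt.mpr h.2.le)
    · exact h.1
  obtain ⟨η, hη, hsub⟩ := mem_nhdsGT_iff_exists_Ioo_subset.mp hev
  have hη0 : (0:ℝ) < η := hη
  have hanti : StrictAntiOn g (Set.Icc 0 η) := by
    apply strictAntiOn_of_deriv_neg (convex_Icc 0 η)
      (fun s _ => (hg s).continuousAt.continuousWithinAt)
    intro s hs
    rw [interior_Icc] at hs
    rw [(hg s).deriv]
    exact hsub hs
  have : g η < g 0 :=
    hanti (Set.mem_Icc.mpr ⟨le_refl 0, hη0.le⟩) (Set.mem_Icc.mpr ⟨hη0.le, le_refl η⟩) hη0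
  exact absurd (hmin η) (not_le.mpr this)

/-- Integer-vector spatial periodicity from unit periodicity in each coordinate. -/
private lemma per_int {d : ℕ} {φ : (Fin d → ℝ) → ℝ → ℝ}
    (hφx : ∀ x t i, φ (x + Pi.single i 1) t = φ x t) :
    ∀ (x : Fin d → ℝ) (t : ℝ) (n : Fin d → ℤ), φ (x + fun i => (n i : ℝ)) t = φ x t := by
  have hsingle : ∀ (m : ℤ) (x : Fin d → ℝ) (t : ℝ) (i : Fin d),
      φ (x + Pi.single i (m : ℝ)) t = φ x t := by
    intro m
    induction m using Int.induction_on with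
    | zero => intro x t i; simp
    | succ k ih =>
      intro x t i
      have : (Pi.single i (((k : ℤ) + 1 : ℤ) : ℝ) : Fin d → ℝ)
          = Pi.single i ((k : ℤ) : ℝ) + Pi.single i 1 := by
        rw [← Pi.single_add]; push_cast; ring_nf
      rw [this, ← add_assoc, hφx, ih]
    | pred k ih =>
      intro x t i
      have : (Pi.single i ((-(k : ℤ) - 1 : ℤ) : ℝ) : Fin d → ℝ) + Pi.single i 1
          = Pi.single i ((-(k : ℤ) : ℤ) : ℝ) := by
        rw [← Pi.single_add]; push_cast; ring_nf
      calc φ (x + Pi.single i ((-(k:ℤ) - 1 : ℤ) : ℝ)) t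
          = φ ((x + Pi.single i ((-(k:ℤ) - 1 : ℤ) : ℝ)) + Pi.single i 1) t := (hφx _ _ _).symm
        _ = φ (x + Pi.single i ((-(k:ℤ) : ℤ) : ℝ)) t := by rw [add_assoc, this]
        _ = φ x t := ih x t i
  intro x t n
  have key : ∀ s : Finset (Fin d), φ (x + ∑ i ∈ s, Pi.single i ((n i : ℝ))) t = φ x t := by
    intro s
    induction s using Finset.induction_on with
    | empty => simp
    | @insert j s' hj ih =>
      rw [Finset.sum_insert hj]
      have : x + (Pi.single j ((n j : ℝ)) + ∑ i ∈ s', Pi.single i ((n i : ℝ)))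
          = (x + ∑ i ∈ s', Pi.single i ((n i : ℝ))) + Pi.single j ((n j : ℝ)) := by
        abel
      rw [this, hsingle, ih]
  have : (fun i => (n i : ℝ)) = ∑ i, Pi.single i ((n i : ℝ)) := by
    rw [Finset.univ_sum_single]
  rw [this]
  exact key Finset.univ

/-- Maximum-principle step: if `φ` is a C², space-time periodic solution of
`φ_t + εΔφ + H(x,Dφ,t) = c` with `min H(·,0,·) ≤ c ≤ max H(·,0,·)`, and
`ψ = max φ − φ + 1` satisfies `ψ(·,t_ε) ≤ e^K`, then
`ψ ≤ (max H(·,0,·) − min H(·,0,·)) + e^K` everywhere. -/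
theorem stmt14 (d : ℕ)
    (H : (Fin d → ℝ) → (Fin d → ℝ) → ℝ → ℝ)
    (hH : Continuous fun q : ((Fin d → ℝ) × (Fin d → ℝ) × ℝ) => H q.1 q.2.1 q.2.2)
    (Hmin Hmax : ℝ)
    (hHmin : ∀ x t, Hmin ≤ H x 0 t) (hHmax : ∀ x t, H x 0 t ≤ Hmax)
    (ε c : ℝ) (hε : 0 < ε) (hc₁ : Hmin ≤ c) (hc₂ : c ≤ Hmax)
    (φ : (Fin d → ℝ) → ℝ → ℝ)
    (hφ : ContDiff ℝ 2 fun q : ((Fin d → ℝ) × ℝ) => φ q.1 q.2)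
    (hφt : ∀ x t, φ x (t + 1) = φ x t)
    (hφx : ∀ x t i, φ (x + Pi.single i 1) t = φ x t)
    (hpde : ∀ x t, deriv (φ x) t
      + ε * (∑ i, fderiv ℝ (fun y => fderiv ℝ (fun z => φ z t) y (Pi.single i 1)) x
          (Pi.single i 1))
      + H x (fun i => fderiv ℝ (fun z => φ z t) x (Pi.single i 1)) t = c)
    (M0 : ℝ) (hM0 : ∀ x t, φ x t ≤ M0)
    (K te : ℝ) (hte : ∀ x, M0 - φ x te + 1 ≤ Real.exp K) :
    ∀ x t, M0 - φ x t + 1 ≤ (Hmax - Hmin) + Real.exp K := by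
  intro x₀ t₀
  -- It suffices to prove the bound with an extra `δ` for every `δ > 0`.
  by_contra hcon
  push_neg at hcon
  set X := M0 - φ x₀ t₀ + 1 with hX
  set B := (Hmax - Hmin) + Real.exp K with hB
  have hδpos : (0:ℝ) < (X - B) / 2 := by simp only [hX, hB] at hcon ⊢; linarith
  set δ := (X - B) / 2 with hδdef
  suffices hsuff : X ≤ B + δ by simp only [hδdef] at hsuff; linarith
  clear hcon
  set a := Hmax - Hmin with hadef
  have ha : 0 ≤ a := by simp only [hadef]; linarith
  -- basic regularity
  have hfx : ∀ t' : ℝ, ContDiff ℝ 2 (fun z : Fin d → ℝ => φ z t') := fun t' =>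
    hφ.comp (contDiff_id.prodMk contDiff_const)
  have hft : ∀ x' : Fin d → ℝ, ContDiff ℝ 2 (φ x') := fun x' =>
    hφ.comp (contDiff_const.prodMk contDiff_id)
  have hφc : Continuous fun q : (Fin d → ℝ) × ℝ => φ q.1 q.2 := hφ.continuous
  -- the comparison function
  set v : ((Fin d → ℝ) × ℝ) → ℝ :=
    fun p => M0 - φ p.1 (p.2 + te) + 1 - Real.exp K + (a + δ) * p.2 with hvdef
  have hvcont : Continuous v := by
    have h1 : Continuous fun p : (Fin d → ℝ) × ℝ => φ p.1 (p.2 + te) :=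
      hφc.comp (continuous_fst.prodMk (continuous_snd.add continuous_const))
    exact ((((continuous_const.sub h1).add continuous_const).sub continuous_const).add
      (continuous_const.mul continuous_snd))
  -- spatial periodicity: reduce to the unit box
  have hper : ∀ (y : Fin d → ℝ) (t' : ℝ), φ y t' = φ (fun i => Int.fract (y i)) t' := by
    intro y t'
    have h1 := per_int hφx (fun i => Int.fract (y i)) t' (fun i => ⌊y i⌋)
    have he : ((fun i => Int.fract (y i)) + fun i => ((⌊y i⌋ : ℤ) : ℝ)) = y := by
      funext i
      exact Int.fract_add_floor (y i)
    rw [he] at h1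
    exact h1
  -- extreme value theorem on the compact box × time interval
  set Kset : Set ((Fin d → ℝ) × ℝ) :=
    (Set.Icc (0 : Fin d → ℝ) 1) ×ˢ (Set.Icc (-1 : ℝ) 0) with hKdef
  have hKc : IsCompact Kset := isCompact_Icc.prod isCompact_Icc
  have hKne : Kset.Nonempty :=
    ⟨(0, 0), Set.mem_Icc.mpr ⟨le_refl _, zero_le_one⟩,
      Set.mem_Icc.mpr ⟨by norm_num, le_refl _⟩⟩
  obtain ⟨q, hqK, hqmax⟩ := hKc.exists_isMaxOn hKne hvcont.continuousOn
  -- maximality extends to all of space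
  have hmax' : ∀ (y : Fin d → ℝ), ∀ s ∈ Set.Icc (-1:ℝ) 0, v (y, s) ≤ v q := by
    intro y s hs
    have hyb : (fun i => Int.fract (y i)) ∈ Set.Icc (0 : Fin d → ℝ) 1 :=
      Set.mem_Icc.mpr ⟨fun i => Int.fract_nonneg _, fun i => (Int.fract_lt_one _).le⟩
    have heq : v (y, s) = v ((fun i => Int.fract (y i)), s) := by
      simp only [hvdef]
      rw [hper y (s + te)]
    rw [heq]
    exact hqmax ⟨hyb, hs⟩
  obtain ⟨xb, tb⟩ := q
  have hxb : xb ∈ Set.Icc (0 : Fin d → ℝ) 1 := hqK.1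
  have htbmem : tb ∈ Set.Icc (-1:ℝ) 0 := hqK.2
  -- key claim: the max of v is nonpositive
  have hkey : v (xb, tb) ≤ 0 := by
    by_contra hpos
    push_neg at hpos
    -- the max is attained at tb < 0
    have htb0 : tb < 0 := by
      rcases lt_or_eq_of_le htbmem.2 with h | h
      · exact h
      · exfalso
        have h0 : v (xb, 0) ≤ 0 := by
          simp only [hvdef, zero_add, mul_zero, add_zero]
          have := hte xb
          linarith
        rw [h] at hpos
        exact absurd h0 (not_le.mpr hpos)
    set t' := tb + te with ht'def
    -- spatial global min of φ(·,t') at xb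
    have hxmin : ∀ y, φ xb t' ≤ φ y t' := by
      intro y
      have h1 := hmax' y tb htbmem
      simp only [hvdef] at h1
      linarith
    -- time-derivative bound at tb
    have hφdiffT : HasDerivAt (φ xb) (deriv (φ xb) t') t' :=
      (((hft xb).differentiable (by norm_num)) t').hasDerivAt
    have hF : HasDerivAt (fun s : ℝ => φ xb (s + te)) (deriv (φ xb) t') tb := by
      have h1 := hφdiffT.comp tb ((hasDerivAt_id tb).add_const te)
      simpa [Function.comp_def, ht'def] using h1
    have hV : HasDerivAt (fun s : ℝ => v (xb, s)) (-(deriv (φ xb) t') + (a + δ)) tb := by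
      have h1 := ((hF.const_sub M0).add_const 1).sub_const (Real.exp K)
      have h2 : HasDerivAt (fun s : ℝ => (a + δ) * s) (a + δ) tb := by
        simpa using (hasDerivAt_id tb).const_mul (a + δ)
      exact h1.add h2
    have hVt : -(deriv (φ xb) t') + (a + δ) ≤ 0 := by
      refine deriv_nonpos_of_maxOn_right hV htb0 ?_
      intro t ht
      exact hmax' xb t ⟨le_trans htbmem.1 ht.1, ht.2⟩
    have hTd : a + δ ≤ deriv (φ xb) t' := by linarith
    -- spatial derivative facts
    have hfC : ContDiff ℝ 2 (fun z : Fin d → ℝ => φ z t') := hfx t'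
    have hfd : Differentiable ℝ (fun z : Fin d → ℝ => φ z t') :=
      hfC.differentiable (by norm_num)
    have hf'C : ContDiff ℝ 1 (fderiv ℝ (fun z : Fin d → ℝ => φ z t')) :=
      hfC.fderiv_right (by norm_num)
    have hf'd : Differentiable ℝ (fderiv ℝ (fun z : Fin d → ℝ => φ z t')) :=
      hf'C.differentiable one_ne_zero
    -- per-direction line restrictions
    have hline : ∀ (e : Fin d → ℝ) (s : ℝ), HasDerivAt (fun s : ℝ => xb + s • e) e s := by
      intro e s
      simpa using ((hasDerivAt_id s).smul_const e).const_add xb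
    have hg : ∀ (e : Fin d → ℝ) (s : ℝ),
        HasDerivAt (fun s : ℝ => φ (xb + s • e) t')
          (fderiv ℝ (fun z : Fin d → ℝ => φ z t') (xb + s • e) e) s := by
      intro e s
      have h1 := ((hfd (xb + s • e)).hasFDerivAt).comp_hasDerivAt s (hline e s)
      simpa [Function.comp_def] using h1
    have hgmin : ∀ (e : Fin d → ℝ), ∀ s : ℝ,
        (fun s : ℝ => φ (xb + s • e) t') 0 ≤ (fun s : ℝ => φ (xb + s • e) t') s := by
      intro e s
      simp only [zero_smul, add_zero]
      exact hxmin _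
    -- first derivatives vanish
    have hDzero : ∀ i : Fin d,
        fderiv ℝ (fun z : Fin d → ℝ => φ z t') xb (Pi.single i 1) = 0 := by
      intro i
      have hloc : IsLocalMin (fun s : ℝ => φ (xb + s • (Pi.single i 1 : Fin d → ℝ)) t') 0 :=
        Filter.Eventually.of_forall (hgmin (Pi.single i 1 : Fin d → ℝ))
      have h1 := hloc.hasDerivAt_eq_zero (hg (Pi.single i 1) 0)
      rwa [zero_smul, add_zero] at h1
    have hDfun : (fun i => fderiv ℝ (fun z : Fin d → ℝ => φ z t') xb (Pi.single i 1))
        = (0 : Fin d → ℝ) := by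
      funext i
      simp [hDzero i]
    -- second derivatives are nonneg
    have hsec : ∀ i : Fin d, 0 ≤ fderiv ℝ
        (fun y => fderiv ℝ (fun z : Fin d → ℝ => φ z t') y (Pi.single i 1)) xb
        (Pi.single i 1) := by
      intro i
      set e : Fin d → ℝ := Pi.single i 1 with hedef
      have hGd : DifferentiableAt ℝ
          (fun y => fderiv ℝ (fun z : Fin d → ℝ => φ z t') y e) xb :=
        (hf'd xb).clm_apply (differentiableAt_const e)
      have hg' : HasDerivAt
          (fun s : ℝ => fderiv ℝ (fun z : Fin d → ℝ => φ z t') (xb + s • e) e)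
          (fderiv ℝ (fun y => fderiv ℝ (fun z : Fin d → ℝ => φ z t') y e) xb e) 0 := by
        have h0 : xb + (0:ℝ) • e = xb := by simp
        have hGd' : HasFDerivAt
            (fun y => fderiv ℝ (fun z : Fin d → ℝ => φ z t') y e)
            (fderiv ℝ (fun y => fderiv ℝ (fun z : Fin d → ℝ => φ z t') y e) xb)
            (xb + (0:ℝ) • e) := by
          rw [h0]; exact hGd.hasFDerivAt
        have h1 := hGd'.comp_hasDerivAt 0 (hline e 0)
        simpa [Function.comp_def] using h1
      exact second_deriv_nonneg_of_min (hg e) hg' (hgmin e)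
    -- plug into the PDE
    have hpde' := hpde xb t'
    rw [hDfun] at hpde'
    have hSum : 0 ≤ ∑ i, fderiv ℝ
        (fun y => fderiv ℝ (fun z : Fin d → ℝ => φ z t') y (Pi.single i 1)) xb
        (Pi.single i 1) := Finset.sum_nonneg fun i _ => hsec i
    have hHb : Hmin ≤ H xb 0 t' := hHmin xb t'
    have hεS : 0 ≤ ε * ∑ i, fderiv ℝ
        (fun y => fderiv ℝ (fun z : Fin d → ℝ => φ z t') y (Pi.single i 1)) xb
        (Pi.single i 1) := mul_nonneg hε.le hSum
    simp only [hadef] at hTd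
    nlinarith [hpde', hTd, hHb, hεS, hc₂, hδpos]
  -- conclude the bound on the strip [-1,0]
  have hbound : ∀ (y : Fin d → ℝ), ∀ s ∈ Set.Icc (-1:ℝ) 0,
      M0 - φ y (s + te) + 1 ≤ Real.exp K + (a + δ) := by
    intro y s hs
    have h1 := (hmax' y s hs).trans hkey
    simp only [hvdef] at h1
    have h2 : -((a + δ) * s) ≤ a + δ := by nlinarith [hs.1, ha, hδpos.le]
    linarith
  -- reduce arbitrary time to the strip using time-periodicity
  have hper1 : Function.Periodic (φ x₀) 1 := hφt x₀
  set n : ℤ := ⌈t₀ - te⌉ with hndef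
  set s : ℝ := t₀ - te - n with hsdef
  have hs1 : -1 ≤ s := by
    have := Int.ceil_lt_add_one (t₀ - te)
    simp only [hsdef, hndef]
    linarith
  have hs2 : s ≤ 0 := by
    have := Int.le_ceil (t₀ - te)
    simp only [hsdef, hndef]
    linarith
  have heq : φ x₀ t₀ = φ x₀ (s + te) := by
    have h1 := (hper1.int_mul n) (s + te)
    have h2 : s + te + (n : ℝ) * 1 = t₀ := by
      simp only [hsdef]
      ring
    rw [h2] at h1
    exact h1
  have := hbound x₀ s ⟨hs1, hs2⟩
  rw [← heq] at this
  simp only [hX, hB, hadef]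
  linarith
end
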